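/- arXiv:math/0411275 — 7 statements merged into one kernel-verified Lean document; each statement's English description precedes it below -/
import Mathlib

section
/- In any solution of the peg puzzle, every pair consisting of one red peg and one blue peg crosses (one jumps over the other) an odd number of times; in particular, each such pair crosses at least once. -/
open scoped Classical

/-- A peg of the puzzle: `Sum.inl i` is the `i`-th blue peg, `Sum.inr i` is
the `i`-th red peg. -/
abbrev Peg (N : ℕ) := Fin N ⊕ Fin N

/-- A solution of the `N`-peg puzzle using `L` moves, recorded by the
position (a hole, numbered `1,…,2N+1`) of each peg at each time `0,…,L`.
Initially the blue pegs occupy holes `1,…,N` and the red pegs holes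
`N+2,…,2N+1`; at the end the red pegs occupy the leftmost `N` holes and the
blue pegs the rightmost `N` holes.  On each move exactly one peg moves, by
`±1` into the adjacent empty hole (a step), or by `±2` over one adjacent peg
into the empty hole (a jump). -/
structure PegSolution (N L : ℕ) where
  pos : ℕ → Peg N → ℤ
  mem_range : ∀ t ≤ L, ∀ p, 1 ≤ pos t p ∧ pos t p ≤ 2 * N + 1
  inj : ∀ t ≤ L, ∀ p q, pos t p = pos t q → p = q
  init_blue : ∀ i : Fin N, pos 0 (Sum.inl i) = (i : ℤ) + 1
  init_red : ∀ i : Fin N, pos 0 (Sum.inr i) = (N : ℤ) + 2 + (i : ℤ)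
  final_blue : ∀ i : Fin N, (N : ℤ) + 2 ≤ pos L (Sum.inl i)
  final_red : ∀ i : Fin N, pos L (Sum.inr i) ≤ (N : ℤ)
  move : ∀ t < L, ∃ mover : Peg N,
    (∀ q, q ≠ mover → pos (t + 1) q = pos t q) ∧
    ((pos (t + 1) mover - pos t mover = 1 ∨ pos (t + 1) mover - pos t mover = -1) ∨
     ((pos (t + 1) mover - pos t mover = 2 ∨ pos (t + 1) mover - pos t mover = -2) ∧
      ∃ mid : Peg N, mid ≠ mover ∧ 2 * pos t mid = pos t mover + pos (t + 1) mover))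

/-- The pair consisting of the blue peg `i` and the red peg `j` crosses on
move `t` (one jumps over the other): their relative order changes between
times `t` and `t + 1`. -/
def CrossesAt {N L : ℕ} (s : PegSolution N L) (i j : Fin N) (t : ℕ) : Prop :=
  (s.pos t (Sum.inl i) - s.pos t (Sum.inr j)) *
    (s.pos (t + 1) (Sum.inl i) - s.pos (t + 1) (Sum.inr j)) < 0

/-- The weight of the position at time `t`: total distance moved right by the
blue pegs plus total distance moved left by the red pegs. -/
def weight {N L : ℕ} (s : PegSolution N L) (t : ℕ) : ℤ :=
  (∑ i : Fin N, (s.pos t (Sum.inl i) - s.pos 0 (Sum.inl i))) +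
  ∑ i : Fin N, (s.pos 0 (Sum.inr i) - s.pos t (Sum.inr i))

/-- Move `t` is a first cross: some red–blue pair crosses on move `t` for the
first time. -/
def IsFirstCross {N L : ℕ} (s : PegSolution N L) (t : ℕ) : Prop :=
  ∃ i j : Fin N, CrossesAt s i j t ∧ ∀ u < t, ¬ CrossesAt s i j u

/-!
For a blue peg and a red peg, the difference of their positions never vanishes, is negative at the
start and positive at the end, and the pair crosses exactly when this difference changes sign. A
nonvanishing sequence changes sign an even number of times iff its endpoints have the same sign.
-/

section SignChanges

variable {R : Type*} [Ring R] [LinearOrder R] [IsStrictOrderedRing R]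

def signChanges (f : ℕ → R) (M : ℕ) : Finset ℕ :=
  (Finset.range M).filter fun t => f t * f (t + 1) < 0

theorem mul_pos_iff_mul_pos_iff_mul_pos {a b c : R} (ha : a ≠ 0) (hb : b ≠ 0) (hc : c ≠ 0) :
    0 < a * c ↔ (0 < a * b ↔ 0 < b * c) := by
  rcases ha.lt_or_gt with ha | ha <;> rcases hb.lt_or_gt with hb | hb <;>
    rcases hc.lt_or_gt with hc | hc <;>
    simp [mul_pos_iff, ha, hb, hc, ha.not_gt, hb.not_gt, hc.not_gt]

theorem even_card_signChanges_iff {f : ℕ → R} {M : ℕ} (hf : ∀ t ≤ M, f t ≠ 0) :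
    Even (signChanges f M).card ↔ 0 < f 0 * f M := by
  induction M with
  | zero => simpa [signChanges] using mul_self_pos.mpr (hf 0 le_rfl)
  | succ M ih =>
    rw [signChanges, Finset.card_filter, Finset.sum_range_succ, ← Finset.card_filter,
      Nat.even_add, ← signChanges, ih fun t ht => hf t (by omega),
      mul_pos_iff_mul_pos_iff_mul_pos (hf 0 (by omega)) (hf M (by omega)) (hf (M + 1) le_rfl)]
    split_ifs with h
    · simp [h.not_gt]
    · simp [lt_of_le_of_ne (not_lt.mp h) (mul_ne_zero (hf M (by omega)) (hf (M + 1) le_rfl)).symm]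

end SignChanges

/-- In any solution of the peg puzzle, every pair consisting of one red peg
and one blue peg crosses an odd number of times; in particular, each such
pair crosses at least once. -/
theorem pair_crosses_odd (N L : ℕ) (s : PegSolution N L) (i j : Fin N) :
    Odd ((Finset.range L).filter (fun t => CrossesAt s i j t)).card ∧
    1 ≤ ((Finset.range L).filter (fun t => CrossesAt s i j t)).card := by
  set gap : ℕ → ℤ := fun t => s.pos t (Sum.inl i) - s.pos t (Sum.inr j)
  have gap_ne_zero : ∀ t ≤ L, gap t ≠ 0 := fun t ht h =>
    Sum.inl_ne_inr (s.inj t ht _ _ (sub_eq_zero.mp h))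
  have gap_init : gap 0 < 0 := by
    have := s.init_blue i; have := s.init_red j; have : (i : ℤ) < N := mod_cast i.isLt
    simp only [gap]; omega
  have gap_final : 0 < gap L := by
    have := s.final_blue i; have := s.final_red j
    simp only [gap]; omega
  have crossings_eq :
      (Finset.range L).filter (fun t => CrossesAt s i j t) = signChanges gap L := by
    ext t; simp only [signChanges, Finset.mem_filter]; rfl
  have odd_crossings : Odd ((Finset.range L).filter (fun t => CrossesAt s i j t)).card := by
    rw [crossings_eq, ← Nat.not_even_iff_odd, even_card_signChanges_iff gap_ne_zero]
    exact (mul_neg_of_neg_of_pos gap_init gap_final).not_gt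
  exact ⟨odd_crossings, odd_crossings.pos⟩
end

section
/- If two pegs P and Q occupy positions p < q on the line and their positions change only through steps (±1 into an adjacent empty hole) and jumps (±2 over one adjacent peg), with P and Q never occupying the same hole, and at the end P occupies a position strictly greater than Q's, then the number of moves on which one of P, Q jumps over the other is odd. -/
set_option maxHeartbeats 1000000 in
/-- Two pegs `P`, `Q` with integer positions, moving only by steps (±1) and
jumps (±2, over the peg occupying the intermediate hole), never occupying the
same hole, which start with `P 0 < Q 0` and end with `Q L < P L`, must jump
over each other an odd number of times. A move on which one jumps over the
other is one where the mover changes position by ±2 and the other peg occupies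
the intermediate hole. -/
theorem crossings_odd (L : ℕ) (P Q : ℕ → ℤ)
    (hne : ∀ t ≤ L, P t ≠ Q t)
    (hone : ∀ t < L, P (t + 1) = P t ∨ Q (t + 1) = Q t)
    (hP : ∀ t < L, P (t + 1) - P t = 0 ∨ P (t + 1) - P t = 1 ∨
      P (t + 1) - P t = -1 ∨ P (t + 1) - P t = 2 ∨ P (t + 1) - P t = -2)
    (hQ : ∀ t < L, Q (t + 1) - Q t = 0 ∨ Q (t + 1) - Q t = 1 ∨
      Q (t + 1) - Q t = -1 ∨ Q (t + 1) - Q t = 2 ∨ Q (t + 1) - Q t = -2)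
    (hstart : P 0 < Q 0) (hend : Q L < P L) :
    Odd ((Finset.range L).filter (fun t =>
      (Q (t + 1) = Q t ∧ 2 * Q t = P t + P (t + 1) ∧
        (P (t + 1) - P t = 2 ∨ P (t + 1) - P t = -2)) ∨
      (P (t + 1) = P t ∧ 2 * P t = Q t + Q (t + 1) ∧
        (Q (t + 1) - Q t = 2 ∨ Q (t + 1) - Q t = -2)))).card := by
  classical
  set p : ℕ → Prop := fun t =>
      (Q (t + 1) = Q t ∧ 2 * Q t = P t + P (t + 1) ∧
        (P (t + 1) - P t = 2 ∨ P (t + 1) - P t = -2)) ∨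
      (P (t + 1) = P t ∧ 2 * P t = Q t + Q (t + 1) ∧
        (Q (t + 1) - Q t = 2 ∨ Q (t + 1) - Q t = -2)) with hp
  have key : ∀ t < L, p t ↔ ¬(P (t + 1) < Q (t + 1) ↔ P t < Q t) := by
    intro t ht
    have h1 := hne t (le_of_lt ht)
    have h2 := hne (t + 1) (by omega)
    have h3 := hP t ht
    have h4 := hQ t ht
    rcases hone t ht with h5 | h5 <;> simp only [hp] <;> constructor <;> intro h <;> omega
  have main : ∀ n ≤ L,
      (Odd ((Finset.range n).filter p).card ↔ ¬(P n < Q n ↔ P 0 < Q 0)) := by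
    intro n
    induction n with
    | zero => simp
    | succ n ih =>
      intro hn
      have hn' : n ≤ L := by omega
      have ihn := ih hn'
      rw [Finset.range_add_one, Finset.filter_insert]
      have hkey := key n (by omega)
      by_cases hpn : p n
      · rw [if_pos hpn, Finset.card_insert_of_notMem (by simp)]
        rw [Nat.odd_add_one, Nat.not_odd_iff_even, ← Nat.not_odd_iff_even, not_iff_not, ihn]
        rw [hkey] at hpn
        clear * - hpn
        tauto
      · rw [if_neg hpn, ihn]
        rw [hkey] at hpn
        rw [not_not] at hpn
        clear * - hpn
        tauto
  have := (main L le_rfl).2 (by intro h; omega)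
  exact this
end

section
/- Any solution of the N-peg puzzle contains at least N² jumps in which a red peg and a blue peg cross for the first time (one 'first cross' for each of the N² red–blue pairs), and these first crosses contribute a total weight increase of exactly 2N². -/
open scoped Classical

/-! The gap `pos (blue i) - pos (red j)` starts negative, ends positive and never vanishes, so each
pair crosses, and until it does the gap stays negative. A move displaces a single peg by at most
`2`, so on the first cross the gap jumps from `-1` to `1`: the mover is blue `i` jumping two holes
right or red `j` jumping two holes left, which adds `2` to the weight. The mover and its landing
hole determine the pair, so the `N²` pairs have pairwise distinct first crosses. -/

theorem neg_of_forall_not_mul_succ_neg {α : Type*} [Ring α] [LinearOrder α] [IsStrictOrderedRing α]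
    {f : ℕ → α} {t : ℕ} (h₀ : f 0 < 0) (hne : ∀ u ≤ t, f u ≠ 0)
    (hsign : ∀ u < t, ¬ f u * f (u + 1) < 0) : f t < 0 := by
  induction t with
  | zero => exact h₀
  | succ u ih =>
    have hu : f u < 0 := ih (fun v hv => hne v (by omega)) (fun v hv => hsign v (by omega))
    refine (hne (u + 1) le_rfl).lt_or_gt.resolve_right fun hpos => ?_
    exact hsign u (Nat.lt_succ_self u) (mul_neg_of_neg_of_pos hu hpos)

-- `weight s t = ∑ p, travelSign p * (s.pos t p - s.pos 0 p)`.
def travelSign {N : ℕ} : Peg N → ℤ := Sum.elim (fun _ => 1) (fun _ => -1)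

namespace PegSolution

variable {N L : ℕ} (s : PegSolution N L)

-- `CrossesAt s i j t` is definitionally `s.gap i j t * s.gap i j (t + 1) < 0`.
def gap (i j : Fin N) (t : ℕ) : ℤ := s.pos t (Sum.inl i) - s.pos t (Sum.inr j)

theorem gap_ne_zero (i j : Fin N) {t : ℕ} (ht : t ≤ L) : s.gap i j t ≠ 0 := fun h =>
  Sum.inl_ne_inr (s.inj t ht _ _ (sub_eq_zero.mp h))

theorem gap_zero_neg (i j : Fin N) : s.gap i j 0 < 0 := by
  have hi : (i : ℤ) < N := by exact_mod_cast i.isLt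
  have hj : (0 : ℤ) ≤ j := by positivity
  rw [gap, s.init_blue, s.init_red]
  omega

theorem gap_final_pos (i j : Fin N) : 0 < s.gap i j L := by
  have := s.final_blue i
  have := s.final_red j
  rw [gap]
  omega

theorem gap_neg_of_forall_not_crossesAt {i j : Fin N} {t : ℕ} (ht : t ≤ L)
    (h : ∀ u < t, ¬ CrossesAt s i j u) : s.gap i j t < 0 :=
  neg_of_forall_not_mul_succ_neg (s.gap_zero_neg i j)
    (fun _ hu => s.gap_ne_zero i j (hu.trans ht)) h

theorem exists_crossesAt (i j : Fin N) : ∃ t, t < L ∧ CrossesAt s i j t := by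
  by_contra! h
  exact (s.gap_final_pos i j).not_gt
    (s.gap_neg_of_forall_not_crossesAt le_rfl fun u hu => h u hu)

theorem exists_mover {t : ℕ} (ht : t < L) : ∃ m : Peg N,
    (∀ q, q ≠ m → s.pos (t + 1) q = s.pos t q) ∧ |s.pos (t + 1) m - s.pos t m| ≤ 2 := by
  obtain ⟨m, hfix, hstep⟩ := s.move t ht
  refine ⟨m, hfix, abs_le.mpr ?_⟩
  rcases hstep with (h | h) | ⟨h | h, -⟩ <;> omega

theorem weight_succ_sub_weight {t : ℕ} {m : Peg N}
    (hfix : ∀ q, q ≠ m → s.pos (t + 1) q = s.pos t q) :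
    weight s (t + 1) - weight s t = travelSign m * (s.pos (t + 1) m - s.pos t m) := by
  have hsum : weight s (t + 1) - weight s t =
      ∑ p : Peg N, travelSign p * (s.pos (t + 1) p - s.pos t p) := by
    simp only [weight, Fintype.sum_sum_type, travelSign, Sum.elim_inl, Sum.elim_inr,
      ← Finset.sum_sub_distrib, ← Finset.sum_add_distrib]
    exact Finset.sum_congr rfl fun _ _ => by ring
  rw [hsum, Finset.sum_eq_single m (fun p _ hp => by rw [hfix p hp, sub_self, mul_zero])
    (fun h => absurd (Finset.mem_univ m) h)]

theorem gap_eq_neg_one_and_mover_of_crossesAt {i j : Fin N} {t : ℕ} {m : Peg N}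
    (hfix : ∀ q, q ≠ m → s.pos (t + 1) q = s.pos t q) (hstep : |s.pos (t + 1) m - s.pos t m| ≤ 2)
    (hneg : s.gap i j t < 0) (hc : CrossesAt s i j t) :
    s.gap i j t = -1 ∧ (m = Sum.inl i ∨ m = Sum.inr j) ∧
      travelSign m * (s.pos (t + 1) m - s.pos t m) = 2 := by
  have hpos : 0 < s.gap i j (t + 1) := pos_of_mul_neg_right hc hneg.le
  rw [abs_le] at hstep
  simp only [gap] at hneg hpos ⊢
  by_cases hi : m = Sum.inl i
  · subst hi
    have := hfix (Sum.inr j) Sum.inr_ne_inl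
    exact ⟨by omega, Or.inl rfl, by simp only [travelSign, Sum.elim_inl]; omega⟩
  by_cases hj : m = Sum.inr j
  · subst hj
    have := hfix (Sum.inl i) Sum.inl_ne_inr
    exact ⟨by omega, Or.inr rfl, by simp only [travelSign, Sum.elim_inr]; omega⟩
  have := hfix (Sum.inl i) (Ne.symm hi)
  have := hfix (Sum.inr j) (Ne.symm hj)
  omega

noncomputable def firstCrossTime (i j : Fin N) : ℕ := Nat.find (s.exists_crossesAt i j)

theorem firstCrossTime_lt (i j : Fin N) : s.firstCrossTime i j < L :=
  (Nat.find_spec (s.exists_crossesAt i j)).1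

theorem crossesAt_firstCrossTime (i j : Fin N) : CrossesAt s i j (s.firstCrossTime i j) :=
  (Nat.find_spec (s.exists_crossesAt i j)).2

theorem not_crossesAt_of_lt_firstCrossTime {i j : Fin N} {u : ℕ} (hu : u < s.firstCrossTime i j) :
    ¬ CrossesAt s i j u := fun hc =>
  Nat.find_min (s.exists_crossesAt i j) hu ⟨hu.trans (s.firstCrossTime_lt i j), hc⟩

theorem gap_firstCrossTime_neg (i j : Fin N) : s.gap i j (s.firstCrossTime i j) < 0 :=
  s.gap_neg_of_forall_not_crossesAt (s.firstCrossTime_lt i j).le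
    fun _ => s.not_crossesAt_of_lt_firstCrossTime

theorem firstCrossTime_injective :
    Function.Injective fun p : Fin N × Fin N => s.firstCrossTime p.1 p.2 := by
  rintro ⟨i, j⟩ ⟨i', j'⟩ (heq : s.firstCrossTime i j = s.firstCrossTime i' j')
  have ht := s.firstCrossTime_lt i j
  have hneg' : s.gap i' j' (s.firstCrossTime i j) < 0 := heq ▸ s.gap_firstCrossTime_neg i' j'
  have hc' : CrossesAt s i' j' (s.firstCrossTime i j) := heq ▸ s.crossesAt_firstCrossTime i' j'
  obtain ⟨m, hfix, hstep⟩ := s.exists_mover ht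
  obtain ⟨hgap, hm, -⟩ := s.gap_eq_neg_one_and_mover_of_crossesAt hfix hstep
    (s.gap_firstCrossTime_neg i j) (s.crossesAt_firstCrossTime i j)
  obtain ⟨hgap', hm', -⟩ := s.gap_eq_neg_one_and_mover_of_crossesAt hfix hstep hneg' hc'
  simp only [gap] at hgap hgap'
  -- Blue `i` sits right behind red `j`, so one of the two determines the other.
  have hred : i = i' → j = j' := fun h => by
    subst h; exact Sum.inr_injective (s.inj _ ht.le _ _ (by omega))
  have hblue : j = j' → i = i' := fun h => by
    subst h; exact Sum.inl_injective (s.inj _ ht.le _ _ (by omega))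
  rcases hm with rfl | rfl <;> rcases hm' with h | h <;> simp_all

theorem filter_isFirstCross_eq_image :
    (Finset.range L).filter (IsFirstCross s) =
      Finset.univ.image fun p : Fin N × Fin N => s.firstCrossTime p.1 p.2 := by
  ext t
  simp only [Finset.mem_filter, Finset.mem_range, Finset.mem_image, Finset.mem_univ, true_and,
    Prod.exists]
  constructor
  · rintro ⟨ht, i, j, hc, hmin⟩
    refine ⟨i, j, le_antisymm (Nat.find_min' _ ⟨ht, hc⟩) ?_⟩
    exact not_lt.mp fun h => hmin _ h (s.crossesAt_firstCrossTime i j)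
  · rintro ⟨i, j, rfl⟩
    exact ⟨s.firstCrossTime_lt i j, i, j, s.crossesAt_firstCrossTime i j,
      fun _ => s.not_crossesAt_of_lt_firstCrossTime⟩

theorem card_filter_isFirstCross : ((Finset.range L).filter (IsFirstCross s)).card = N ^ 2 := by
  rw [filter_isFirstCross_eq_image, Finset.card_image_of_injective _ s.firstCrossTime_injective,
    Finset.card_univ, Fintype.card_prod, Fintype.card_fin, sq]

theorem weight_succ_sub_weight_of_isFirstCross {t : ℕ} (ht : t < L) (h : IsFirstCross s t) :
    weight s (t + 1) - weight s t = 2 := by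
  obtain ⟨i, j, hc, hmin⟩ := h
  obtain ⟨m, hfix, hstep⟩ := s.exists_mover ht
  rw [s.weight_succ_sub_weight hfix]
  exact (s.gap_eq_neg_one_and_mover_of_crossesAt hfix hstep
    (s.gap_neg_of_forall_not_crossesAt ht.le hmin) hc).2.2

end PegSolution

/-- Any solution of the `N`-peg puzzle contains at least `N²` moves which are
first crosses (one for each of the `N²` red–blue pairs), and these first
crosses contribute a total weight increase of exactly `2N²`. -/
theorem first_crosses (N L : ℕ) (s : PegSolution N L) :
    N ^ 2 ≤ ((Finset.range L).filter (IsFirstCross s)).card ∧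
    (∑ t ∈ (Finset.range L).filter (IsFirstCross s),
        (weight s (t + 1) - weight s t)) = 2 * (N : ℤ) ^ 2 := by
  have hcard := s.card_filter_isFirstCross
  refine ⟨hcard.ge, ?_⟩
  have hsum : ∀ t ∈ (Finset.range L).filter (IsFirstCross s), weight s (t + 1) - weight s t = 2 :=
    fun t ht => by
      rw [Finset.mem_filter, Finset.mem_range] at ht
      exact s.weight_succ_sub_weight_of_isFirstCross ht.1 ht.2
  rw [Finset.sum_congr rfl hsum, Finset.sum_const, hcard, nsmul_eq_mul]
  push_cast
  ring
end

section
/- Any solution of the N-peg puzzle uses at least N² + 2N moves. -/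
/-- A cell of the puzzle: a blue peg, a red peg, or an empty hole. -/
inductive Cell
  | B : Cell
  | R : Cell
  | O : Cell
  deriving DecidableEq

open Cell

/-- A step: a peg (of either color) moves into the adjacent empty hole. -/
def StepMove (c d : List Cell) : Prop :=
  ∃ x y p, p ≠ O ∧
    ((c = x ++ p :: O :: y ∧ d = x ++ O :: p :: y) ∨
     (c = x ++ O :: p :: y ∧ d = x ++ p :: O :: y))

/-- A jump: a peg jumps over a single adjacent peg into the empty hole. -/
def JumpMove (c d : List Cell) : Prop :=
  ∃ x y p q, p ≠ O ∧ q ≠ O ∧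
    ((c = x ++ p :: q :: O :: y ∧ d = x ++ O :: q :: p :: y) ∨
     (c = x ++ O :: q :: p :: y ∧ d = x ++ p :: q :: O :: y))

/-- A legal move of the puzzle: a step or a jump. -/
def PegMove (c d : List Cell) : Prop := StepMove c d ∨ JumpMove c d

/-- Initial configuration `BᴺORᴺ`. -/
def startCfg (N : ℕ) : List Cell := List.replicate N B ++ O :: List.replicate N R

/-- Final configuration `RᴺOBᴺ`. -/
def finishCfg (N : ℕ) : List Cell := List.replicate N R ++ O :: List.replicate N B

/-- `IsSolution N L f` : `f 0, f 1, …, f L` is a sequence of configurations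
beginning at `BᴺORᴺ`, ending at `RᴺOBᴺ`, each obtained from the previous one
by a legal move; it uses `L` moves. -/
def IsSolution (N L : ℕ) (f : ℕ → List Cell) : Prop :=
  f 0 = startCfg N ∧ f L = finishCfg N ∧ ∀ t < L, PegMove (f t) (f (t + 1))

/-!
Let `pegs c` be the row of pegs with the hole removed, and consider the potential
`Φ = #(pairs of a blue peg before a red peg in pegs c) + blueCut`, where `blueCut` is roughly
twice the number of blue pegs among the first `N` pegs. A step leaves the row of pegs unchanged
and moves `blueCut` by at most one; a jump swaps two neighbouring pegs, which changes the number
of blue–red inversions by at most one and leaves `blueCut` unchanged. So every move lowers `Φ`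
by at most one, while `Φ = N² + 2N` at the start and `Φ = 0` at the end.
-/

theorem List.count_take_sub_one_le {α : Type*} [BEq α] (a : α) (n : ℕ) (l : List α) :
    (l.take (n - 1)).count a ≤ (l.take n).count a ∧
      (l.take n).count a ≤ (l.take (n - 1)).count a + 1 := by
  refine ⟨(List.take_sublist_take_left (Nat.sub_le n 1)).count_le a, ?_⟩
  rcases n with _ | n
  · simp
  · rw [Nat.add_sub_cancel, List.take_add, List.count_append]
    have := List.count_le_length (a := a) (l := (l.drop n).take 1)
    simp only [List.length_take] at this
    omega

theorem List.count_take_swap {α : Type*} [BEq α] (a : α) {m : ℕ} {u : List α} (v : List α)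
    (p q : α) (hm : m ≠ u.length + 1) :
    ((u ++ p :: q :: v).take m).count a = ((u ++ q :: p :: v).take m).count a := by
  rw [List.take_append, List.take_append]
  obtain h | ⟨k, hk⟩ : m - u.length = 0 ∨ ∃ k, m - u.length = k + 2 := by
    rcases hk : m - u.length with _ | _ | k
    · exact .inl rfl
    · omega
    · exact .inr ⟨k, rfl⟩
  · simp [h]
  · simp only [hk, List.take_succ_cons, List.count_append, List.count_cons]
    omega

theorem List.notMem_of_count_append_eq_one {α : Type*} [BEq α] [LawfulBEq α] {a : α}
    {x l : List α} (h : (x ++ l).count a = 1) (ha : a ∈ l) : a ∉ x := by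
  rw [List.count_append] at h
  have := List.count_pos_iff.mpr ha
  exact List.count_eq_zero.mp (by omega)

theorem le_add_of_le_succ_add_one {α : Type*} (P : α → Prop) (φ : α → ℕ) (f : ℕ → α) (L : ℕ)
    (h0 : P (f 0)) (hstep : ∀ t < L, P (f t) → P (f (t + 1)) ∧ φ (f t) ≤ φ (f (t + 1)) + 1) :
    φ (f 0) ≤ φ (f L) + L := by
  suffices ∀ t ≤ L, P (f t) ∧ φ (f 0) ≤ φ (f t) + t from (this L le_rfl).2
  intro t ht
  induction t with
  | zero => exact ⟨h0, le_rfl⟩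
  | succ t ih =>
    obtain ⟨hP, hφ⟩ := ih (by omega)
    obtain ⟨hP', hφ'⟩ := hstep t ht hP
    exact ⟨hP', by omega⟩

namespace PegPuzzle

def inversions : List Cell → ℕ
  | [] => 0
  | a :: l => (if a = B then l.count R else 0) + inversions l

theorem inversions_append (u v : List Cell) :
    inversions (u ++ v) = inversions u + inversions v + u.count B * v.count R := by
  induction u with
  | nil => simp [inversions]
  | cons a u ih =>
    simp only [List.cons_append, inversions, ih, List.count_append, List.count_cons]
    cases a with
    | B => simp only [↓reduceIte, BEq.rfl]; ring
    | R | O => simp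

theorem inversions_replicate (n : ℕ) (a : Cell) : inversions (List.replicate n a) = 0 := by
  induction n with
  | zero => rfl
  | succ n ih => cases a <;> simp [List.replicate_succ, inversions, ih, List.count_replicate]

theorem inversions_swap_le (u v : List Cell) (p q : Cell) :
    inversions (u ++ p :: q :: v) ≤ inversions (u ++ q :: p :: v) + 1 := by
  have hswap : inversions (p :: q :: v) ≤ inversions (q :: p :: v) + 1 := by
    cases p <;> cases q <;> simp [inversions] <;> omega
  have hcount : (p :: q :: v).count R = (q :: p :: v).count R :=
    (List.Perm.swap q p v).count_eq R
  rw [inversions_append, inversions_append, hcount]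
  omega

/-- Only a jump across the middle of the peg row changes how many blue pegs lie among the first
`n` pegs, and such a jump needs the hole `K` at the parity opposite to `n`. For that parity the
peg straddling the middle is counted as half blue, which makes the quantity invariant under
jumps. -/
def blueCut (n : ℕ) (W : List Cell) (K : ℕ) : ℕ :=
  if K % 2 = n % 2 then 2 * (W.take n).count B else 2 * (W.take (n - 1)).count B + 1

theorem blueCut_add_two (n : ℕ) (W : List Cell) (K : ℕ) :
    blueCut n W (K + 2) = blueCut n W K := by
  simp [blueCut, Nat.add_mod_right]

theorem blueCut_succ_le (n : ℕ) (W : List Cell) (K : ℕ) :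
    blueCut n W K ≤ blueCut n W (K + 1) + 1 ∧ blueCut n W (K + 1) ≤ blueCut n W K + 1 := by
  have := List.count_take_sub_one_le B n W
  unfold blueCut
  split_ifs <;> omega

theorem blueCut_swap (n : ℕ) {u : List Cell} (v : List Cell) (p q : Cell) {K : ℕ}
    (hK : K % 2 = u.length % 2) :
    blueCut n (u ++ p :: q :: v) K = blueCut n (u ++ q :: p :: v) K := by
  unfold blueCut
  split_ifs <;> rw [List.count_take_swap B v p q (by omega)]

def pegs (c : List Cell) : List Cell := c.filter (· != O)

def hole (c : List Cell) : ℕ := c.idxOf O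

def potential (n : ℕ) (c : List Cell) : ℕ := inversions (pegs c) + blueCut n (pegs c) (hole c)

section Moves

variable {n : ℕ} {x : List Cell} (y : List Cell) {p q : Cell}

theorem pegs_append (u v : List Cell) : pegs (u ++ v) = pegs u ++ pegs v :=
  List.filter_append _ _

theorem pegs_cons_hole (l : List Cell) : pegs (O :: l) = pegs l := by
  simp [pegs]

theorem pegs_cons_of_ne (l : List Cell) (hp : p ≠ O) : pegs (p :: l) = p :: pegs l := by
  simp [pegs, hp]

theorem pegs_of_notMem (hx : O ∉ x) : pegs x = x :=
  List.filter_eq_self.mpr fun a ha => by simpa using ne_of_mem_of_not_mem ha hx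

theorem pegs_replicate (m : ℕ) (hp : p ≠ O) : pegs (List.replicate m p) = List.replicate m p :=
  pegs_of_notMem fun h => hp (List.eq_of_mem_replicate h).symm

theorem hole_append_cons_hole (hx : O ∉ x) : hole (x ++ O :: y) = x.length := by
  simp [hole, List.idxOf_append_of_notMem hx]

theorem hole_append_cons_of_ne (hx : O ∉ x) (hp : p ≠ O) :
    hole (x ++ p :: y) = hole (x ++ y) + 1 := by
  simp only [hole, List.idxOf_append_of_notMem hx, List.idxOf_cons_ne _ hp, Nat.succ_eq_add_one]
  omega

theorem potential_step (hx : O ∉ x) (hp : p ≠ O) :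
    potential n (x ++ p :: O :: y) ≤ potential n (x ++ O :: p :: y) + 1 ∧
      potential n (x ++ O :: p :: y) ≤ potential n (x ++ p :: O :: y) + 1 := by
  have hpegs : pegs (x ++ p :: O :: y) = pegs (x ++ O :: p :: y) := by
    simp only [pegs_append, pegs_cons_hole, pegs_cons_of_ne _ hp]
  have hhole : hole (x ++ p :: O :: y) = hole (x ++ O :: p :: y) + 1 := by
    rw [hole_append_cons_of_ne _ hx hp, hole_append_cons_hole _ hx, hole_append_cons_hole _ hx]
  have := blueCut_succ_le n (pegs (x ++ O :: p :: y)) (hole (x ++ O :: p :: y))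
  simp only [potential, hpegs, hhole]
  omega

theorem potential_jump (hx : O ∉ x) (hp : p ≠ O) (hq : q ≠ O) :
    potential n (x ++ p :: q :: O :: y) ≤ potential n (x ++ O :: q :: p :: y) + 1 ∧
      potential n (x ++ O :: q :: p :: y) ≤ potential n (x ++ p :: q :: O :: y) + 1 := by
  have hpegs {p q : Cell} (hp : p ≠ O) (hq : q ≠ O) :
      pegs (x ++ p :: q :: O :: y) = x ++ p :: q :: pegs y ∧
        pegs (x ++ O :: p :: q :: y) = x ++ p :: q :: pegs y := by
    simp only [pegs_append, pegs_cons_hole, pegs_cons_of_ne _ hp, pegs_cons_of_ne _ hq,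
      pegs_of_notMem hx, and_self]
  have hhole : hole (x ++ p :: q :: O :: y) = x.length + 2 := by
    simp [hole, List.idxOf_append_of_notMem hx, List.idxOf_cons_ne _ hp, List.idxOf_cons_ne _ hq]
  have hblue := blueCut_swap n (pegs y) p q (u := x) (K := x.length) rfl
  simp only [potential, (hpegs hp hq).1, (hpegs hq hp).2, hhole, hole_append_cons_hole _ hx,
    blueCut_add_two, hblue]
  have := inversions_swap_le x (pegs y) p q
  have := inversions_swap_le x (pegs y) q p
  omega

end Moves

theorem potential_startCfg (N : ℕ) : potential N (startCfg N) = N ^ 2 + 2 * N := by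
  simp [potential, startCfg, pegs_append, pegs_cons_hole, pegs_replicate, blueCut,
    hole_append_cons_hole, inversions_append, inversions_replicate, sq]

theorem potential_finishCfg (N : ℕ) : potential N (finishCfg N) = 0 := by
  simp [potential, finishCfg, pegs_append, pegs_cons_hole, pegs_replicate, blueCut,
    hole_append_cons_hole, inversions_append, inversions_replicate, List.count_replicate]

end PegPuzzle

open PegPuzzle

theorem PegMove.count_hole_eq {c d : List Cell} (h : PegMove c d) : d.count O = c.count O := by
  rcases h with ⟨x, y, p, -, ⟨rfl, rfl⟩ | ⟨rfl, rfl⟩⟩ |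
    ⟨x, y, p, q, -, -, ⟨rfl, rfl⟩ | ⟨rfl, rfl⟩⟩ <;>
    simp [List.count_cons] <;> omega

theorem PegMove.potential_le (n : ℕ) {c d : List Cell} (h : PegMove c d) (hc : c.count O = 1) :
    potential n c ≤ potential n d + 1 := by
  rcases h with ⟨x, y, p, hp, ⟨rfl, rfl⟩ | ⟨rfl, rfl⟩⟩ |
    ⟨x, y, p, q, hp, hq, ⟨rfl, rfl⟩ | ⟨rfl, rfl⟩⟩
  · exact (potential_step y (List.notMem_of_count_append_eq_one hc (by simp)) hp).1
  · exact (potential_step y (List.notMem_of_count_append_eq_one hc (by simp)) hp).2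
  · exact (potential_jump y (List.notMem_of_count_append_eq_one hc (by simp)) hp hq).1
  · exact (potential_jump y (List.notMem_of_count_append_eq_one hc (by simp)) hp hq).2

/-- Any solution of the `N`-peg puzzle uses at least `N² + 2N` moves. -/
theorem lower_bound (N L : ℕ) (f : ℕ → List Cell) (h : IsSolution N L f) :
    N ^ 2 + 2 * N ≤ L := by
  obtain ⟨h0, hL, hmove⟩ := h
  have hone : (f 0).count O = 1 := by simp [h0, startCfg, List.count_replicate]
  have := le_add_of_le_succ_add_one (fun c => c.count O = 1) (potential N) f L hone fun t ht hc =>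
    ⟨(hmove t ht).count_hole_eq.trans hc, (hmove t ht).potential_le N hc⟩
  rwa [h0, hL, potential_startCfg, potential_finishCfg, zero_add] at this
end

section
/- For N = 2n, the move sequence (∏_{k=1}^{n} S j^{2k-1} s J^{2k}) (∏_{k=1}^{n} s j^{2n-2k+1} S J^{2n-2k}) is a valid solution of the peg puzzle consisting of exactly N² + 2N moves, where S (resp. s) denotes a step right by a blue peg (resp. step left by a red peg) and J (resp. j) denotes a jump right by a blue peg (resp. jump left by a red peg). -/
open Cell

/-- The four kinds of moves appearing in the explicit solution:
`S` = blue peg steps right, `s` = red peg steps left,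
`J` = blue peg jumps right, `j` = red peg jumps left. -/
inductive Letter
  | S : Letter
  | s : Letter
  | J : Letter
  | j : Letter
  deriving DecidableEq

/-- `MoveRel l c d` : performing move `l` transforms configuration `c` into `d`.
Jumps are over a single adjacent peg into the empty hole. -/
def MoveRel : Letter → List Cell → List Cell → Prop
  | .S, c, d => ∃ x y, c = x ++ B :: O :: y ∧ d = x ++ O :: B :: y
  | .s, c, d => ∃ x y, c = x ++ O :: R :: y ∧ d = x ++ R :: O :: y
  | .J, c, d => ∃ x y p, p ≠ O ∧ c = x ++ B :: p :: O :: y ∧ d = x ++ O :: p :: B :: y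
  | .j, c, d => ∃ x y p, p ≠ O ∧ c = x ++ O :: p :: R :: y ∧ d = x ++ R :: p :: O :: y

/-- `Plays w c d` : the sequence of moves `w`, each legal from the current
configuration, transforms `c` into `d`. -/
def Plays : List Letter → List Cell → List Cell → Prop
  | [], c, d => c = d
  | l :: ls, c, d => ∃ e, MoveRel l c e ∧ Plays ls e d

/-- The explicit solution sequence for `N = 2n`:
`(∏_{k=1}^{n} S j^{2k-1} s J^{2k}) (∏_{k=1}^{n} s j^{2n-2k+1} S J^{2n-2k})`. -/
def seqEven (n : ℕ) : List Letter :=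
  (((List.range n).map (fun k =>
      Letter.S :: (List.replicate (2 * (k + 1) - 1) Letter.j ++
        Letter.s :: List.replicate (2 * (k + 1)) Letter.J))).flatten) ++
  (((List.range n).map (fun k =>
      Letter.s :: (List.replicate (2 * n - 2 * (k + 1) + 1) Letter.j ++
        Letter.S :: List.replicate (2 * n - 2 * (k + 1)) Letter.J))).flatten)

/-!
Write `N = 2n`. The factor `S j^(2k-1) s J^(2k)` of the first product turns
`B^(N-2k+2) O (RB)^(2k-2) R^(N-2k+2)` into `B^(N-2k) O (RB)^(2k) R^(N-2k)`: the step brings a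
blue peg next to the alternating middle segment, the red pegs jump left across it, the step
brings a red peg next to it, and the blue pegs jump right across it. So the first product leads
from `B^N O R^N` to `O (RB)^N`. Symmetrically the factor `s j^(2m+1) S J^(2m)` of the second
product turns `R^(N-2m-2) O (RB)^(2m+2) B^(N-2m-2)` into `R^(N-2m) O (RB)^(2m) B^(N-2m)`, and
the second product leads from `O (RB)^N` to `R^N O B^N`. Corresponding factors of the two
products have `4n + 4` moves together, so there are `n (4n + 4) = N² + 2N` in all.
-/

open List

@[simp]
theorem List.replicate_append_cons_self {α : Type*} (a : α) (m : ℕ) (t : List α) :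
    replicate m a ++ a :: t = a :: (replicate m a ++ t) := by
  induction m with
  | zero => rfl
  | succ m ih => simp [replicate_succ, ih]

def alt {α : Type*} (p q : α) : ℕ → List α
  | 0 => []
  | m + 1 => p :: q :: alt p q m

section Alt

variable {α : Type*} (p q : α)

@[simp]
theorem alt_zero : alt p q 0 = [] := rfl

@[simp]
theorem alt_succ (m : ℕ) : alt p q (m + 1) = p :: q :: alt p q m := rfl

@[simp]
theorem alt_append_cons (m : ℕ) (t : List α) :
    alt p q m ++ p :: t = p :: (alt q p m ++ t) := by
  induction m generalizing p q with
  | zero => rfl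
  | succ m ih => simp [ih]

theorem alt_succ' (m : ℕ) : alt p q (m + 1) = alt p q m ++ [p, q] := by
  induction m with
  | zero => rfl
  | succ m ih => rw [alt_succ, ih]; simp

end Alt

theorem Plays.append {u v : List Letter} {c d e : List Cell}
    (h₁ : Plays u c d) (h₂ : Plays v d e) : Plays (u ++ v) c e := by
  induction u generalizing c with
  | nil => cases h₁; exact h₂
  | cons l ls ih =>
    obtain ⟨f, hm, hp⟩ := h₁
    exact ⟨f, hm, ih hp⟩

theorem Plays.flatten_range {w : ℕ → List Letter} {c : ℕ → List Cell} (m : ℕ)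
    (h : ∀ k < m, Plays (w k) (c k) (c (k + 1))) :
    Plays ((range m).map w).flatten (c 0) (c m) := by
  induction m with
  | zero => rfl
  | succ m ih =>
    rw [range_succ, map_append, flatten_append]
    exact (ih fun k hk => h k (by omega)).append (by simpa using h m (by omega))

theorem plays_replicate_j (i : ℕ) (x y : List Cell) :
    Plays (replicate i Letter.j) (x ++ O :: alt B R i ++ y) (x ++ alt R B i ++ O :: y) := by
  induction i generalizing x with
  | zero => simp [Plays]
  | succ i ih =>
    refine ⟨(x ++ [R, B]) ++ O :: alt B R i ++ y,
      ⟨x, alt B R i ++ y, B, by simp, by simp, by simp⟩, ?_⟩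
    simpa using ih (x ++ [R, B])

theorem plays_replicate_J (i : ℕ) (x y : List Cell) :
    Plays (replicate i Letter.J) (x ++ alt B R i ++ O :: y) (x ++ O :: alt R B i ++ y) := by
  induction i generalizing y with
  | zero => simp [Plays]
  | succ i ih =>
    refine ⟨x ++ alt B R i ++ O :: R :: B :: y,
      ⟨x ++ alt B R i, y, R, by simp, by simp, by simp⟩, ?_⟩
    simpa [alt_succ'] using ih (R :: B :: y)

-- The factors of the two products of `seqEven` are indexed from `k = 0`, not from `1`.
def growBlock (k : ℕ) : List Letter :=
  Letter.S :: (replicate (2 * (k + 1) - 1) Letter.j ++ Letter.s :: replicate (2 * (k + 1)) Letter.J)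

def shrinkBlock (n k : ℕ) : List Letter :=
  Letter.s :: (replicate (2 * n - 2 * (k + 1) + 1) Letter.j ++
    Letter.S :: replicate (2 * n - 2 * (k + 1)) Letter.J)

theorem seqEven_eq (n : ℕ) :
    seqEven n = ((range n).map growBlock).flatten ++ ((range n).map (shrinkBlock n)).flatten :=
  rfl

theorem plays_grow (a b : ℕ) :
    Plays (Letter.S :: (replicate (b + 1) Letter.j ++ Letter.s :: replicate (b + 2) Letter.J))
      (replicate (a + 2) B ++ O :: alt R B b ++ replicate (a + 2) R)
      (replicate a B ++ O :: alt R B (b + 2) ++ replicate a R) := by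
  have hS : MoveRel .S (replicate (a + 2) B ++ O :: alt R B b ++ replicate (a + 2) R)
      (replicate (a + 1) B ++ O :: alt B R (b + 1) ++ replicate (a + 1) R) :=
    ⟨replicate (a + 1) B, alt R B b ++ replicate (a + 2) R, by simp [replicate_succ],
      by simp [replicate_succ]⟩
  have hs : MoveRel .s (replicate (a + 1) B ++ alt R B (b + 1) ++ O :: replicate (a + 1) R)
      (replicate a B ++ alt B R (b + 2) ++ O :: replicate a R) :=
    ⟨replicate (a + 1) B ++ alt R B (b + 1), replicate a R, by simp [replicate_succ],
      by simp [replicate_succ]⟩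
  exact ⟨_, hS, (plays_replicate_j (b + 1) _ _).append
    ⟨_, hs, plays_replicate_J (b + 2) _ _⟩⟩

theorem plays_shrink (c d : ℕ) :
    Plays (Letter.s :: (replicate (d + 1) Letter.j ++ Letter.S :: replicate d Letter.J))
      (replicate c R ++ O :: alt R B (d + 2) ++ replicate c B)
      (replicate (c + 2) R ++ O :: alt R B d ++ replicate (c + 2) B) := by
  have hs : MoveRel .s (replicate c R ++ O :: alt R B (d + 2) ++ replicate c B)
      (replicate (c + 1) R ++ O :: alt B R (d + 1) ++ replicate (c + 1) B) :=
    ⟨replicate c R, B :: alt R B (d + 1) ++ replicate c B, by simp, by simp [replicate_succ]⟩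
  have hS : MoveRel .S (replicate (c + 1) R ++ alt R B (d + 1) ++ O :: replicate (c + 1) B)
      (replicate (c + 2) R ++ alt B R d ++ O :: replicate (c + 2) B) :=
    ⟨replicate (c + 1) R ++ alt R B d ++ [R], replicate (c + 1) B, by simp [replicate_succ],
      by simp [replicate_succ]⟩
  exact ⟨_, hs, (plays_replicate_j (d + 1) _ _).append
    ⟨_, hS, plays_replicate_J d _ _⟩⟩

theorem plays_growBlocks (n : ℕ) :
    Plays ((range n).map growBlock).flatten (startCfg (2 * n)) (O :: alt R B (2 * n)) := by
  have h := Plays.flatten_range (w := growBlock)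
    (c := fun k =>
      replicate (2 * n - 2 * k) B ++ O :: alt R B (2 * k) ++ replicate (2 * n - 2 * k) R)
    n fun k hk => by
      obtain ⟨a, ha⟩ : ∃ a, 2 * n - 2 * k = a + 2 := ⟨2 * n - 2 * k - 2, by omega⟩
      simp only [growBlock]
      rw [ha, show 2 * n - 2 * (k + 1) = a by omega, show 2 * (k + 1) - 1 = 2 * k + 1 by omega,
        show 2 * (k + 1) = 2 * k + 2 by ring]
      exact plays_grow a (2 * k)
  simpa [startCfg] using h

theorem plays_shrinkBlocks (n : ℕ) :
    Plays ((range n).map (shrinkBlock n)).flatten (O :: alt R B (2 * n)) (finishCfg (2 * n)) := by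
  have h := Plays.flatten_range (w := shrinkBlock n)
    (c := fun k => replicate (2 * k) R ++ O :: alt R B (2 * n - 2 * k) ++ replicate (2 * k) B)
    n fun k hk => by
      obtain ⟨d, hd⟩ : ∃ d, 2 * n - 2 * k = d + 2 := ⟨2 * n - 2 * k - 2, by omega⟩
      simp only [shrinkBlock]
      rw [hd, show 2 * n - 2 * (k + 1) = d by omega, show 2 * (k + 1) = 2 * k + 2 by ring]
      exact plays_shrink (2 * k) d
  simpa [finishCfg] using h

theorem length_growBlock_add_shrinkBlock {n k : ℕ} (hk : k < n) :
    (growBlock k).length + (shrinkBlock n k).length = 4 * (n + 1) := by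
  simp only [growBlock, shrinkBlock, length_cons, length_append, length_replicate]
  omega

theorem length_seqEven (n : ℕ) : (seqEven n).length = 4 * (n + 1) * n := by
  simp only [seqEven_eq, length_append, length_flatten, map_map, Function.comp_def, ← sum_map_add]
  rw [map_congr_left fun k hk => length_growBlock_add_shrinkBlock (mem_range.1 hk), map_const',
    length_range, sum_const_nat, mul_comm]

theorem even_solution_general (n : ℕ) :
    (seqEven n).length = (2 * n) ^ 2 + 2 * (2 * n) ∧
    Plays (seqEven n) (startCfg (2 * n)) (finishCfg (2 * n)) := by
  refine ⟨by rw [length_seqEven]; ring, ?_⟩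
  rw [seqEven_eq]
  exact (plays_growBlocks n).append (plays_shrinkBlocks n)

/-- For `N = 2n`, the sequence
`(∏_{k=1}^{n} S j^{2k-1} s J^{2k}) (∏_{k=1}^{n} s j^{2n-2k+1} S J^{2n-2k})`
is a valid solution of the peg puzzle (every move is legal and it transforms
`BᴺORᴺ` into `RᴺOBᴺ`) consisting of exactly `N² + 2N` moves. -/
theorem even_solution (n : ℕ) (hn : 1 ≤ n) :
    (seqEven n).length = (2 * n) ^ 2 + 2 * (2 * n) ∧
    Plays (seqEven n) (startCfg (2 * n)) (finishCfg (2 * n)) :=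
  even_solution_general n
end

section
/- From the point of view of a fixed peg P, events of type A/B (someone jumps over P moving left, or P moves left) strictly alternate with events of type C/D (someone jumps over P moving right, or P moves right): between any two consecutive events noticed by P, if the first is of type A or B then the second is of type C or D, and vice versa. -/
open scoped Classical

/-- Peg `P` notices a leftward event on move `t` (type A or B): either some
other peg jumps over `P` proceeding left, or `P` itself moves left. -/
def LeftEvent {N L : ℕ} (s : PegSolution N L) (P : Peg N) (t : ℕ) : Prop :=
  s.pos (t + 1) P < s.pos t P ∨
  ∃ q : Peg N, q ≠ P ∧ s.pos (t + 1) q - s.pos t q = -2 ∧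
    2 * s.pos t P = s.pos t q + s.pos (t + 1) q

/-- Peg `P` notices a rightward event on move `t` (type C or D): either some
other peg jumps over `P` proceeding right, or `P` itself moves right. -/
def RightEvent {N L : ℕ} (s : PegSolution N L) (P : Peg N) (t : ℕ) : Prop :=
  s.pos t P < s.pos (t + 1) P ∨
  ∃ q : Peg N, q ≠ P ∧ s.pos (t + 1) q - s.pos t q = 2 ∧
    2 * s.pos t P = s.pos t q + s.pos (t + 1) q

namespace PegAlt

variable {N L : ℕ}

noncomputable def mv (s : PegSolution N L) (t : ℕ) (ht : t < L) : Peg N :=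
  (s.move t ht).choose

lemma mv_fix (s : PegSolution N L) (t : ℕ) (ht : t < L) :
    ∀ q, q ≠ mv s t ht → s.pos (t + 1) q = s.pos t q :=
  (s.move t ht).choose_spec.1

lemma mv_d (s : PegSolution N L) (t : ℕ) (ht : t < L) :
    ((s.pos (t+1) (mv s t ht) - s.pos t (mv s t ht) = 1 ∨
      s.pos (t+1) (mv s t ht) - s.pos t (mv s t ht) = -1) ∨
     ((s.pos (t+1) (mv s t ht) - s.pos t (mv s t ht) = 2 ∨
       s.pos (t+1) (mv s t ht) - s.pos t (mv s t ht) = -2) ∧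
      ∃ mid, mid ≠ mv s t ht ∧
        2 * s.pos t mid = s.pos t (mv s t ht) + s.pos (t+1) (mv s t ht))) :=
  (s.move t ht).choose_spec.2

lemma mv_ne (s : PegSolution N L) (t : ℕ) (ht : t < L) :
    s.pos (t+1) (mv s t ht) ≠ s.pos t (mv s t ht) := by
  rcases mv_d s t ht with (h | h) | ⟨h | h, -⟩ <;> intro he <;> omega

lemma free_unique (s : PegSolution N L) (t : ℕ) (ht : t ≤ L) {a b : ℤ}
    (ha1 : 1 ≤ a) (ha2 : a ≤ 2*N+1) (hb1 : 1 ≤ b) (hb2 : b ≤ 2*N+1)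
    (hfa : ∀ p, s.pos t p ≠ a) (hfb : ∀ p, s.pos t p ≠ b) : a = b := by
  rcases Nat.eq_zero_or_pos N with hN | hN
  · subst hN; push_cast at ha2 hb2; omega
  by_contra hab
  have hinj : Function.Injective (s.pos t) := fun p q h => s.inj t ht p q h
  have hsub : (Finset.univ.image (s.pos t)) ⊆
      (Finset.Icc (1:ℤ) (2*N+1)) \ {a, b} := by
    intro x hx
    simp only [Finset.mem_image, Finset.mem_univ, true_and] at hx
    obtain ⟨p, rfl⟩ := hx
    have hr := s.mem_range t ht p
    simp only [Finset.mem_sdiff, Finset.mem_Icc, Finset.mem_insert,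
      Finset.mem_singleton]
    exact ⟨⟨hr.1, by exact_mod_cast hr.2⟩, by push_neg; exact ⟨hfa p, hfb p⟩⟩
  have hc1 : (Finset.univ.image (s.pos t)).card = 2*N := by
    rw [Finset.card_image_of_injective _ hinj, Finset.card_univ]
    simp [Fintype.card_sum]
    ring
  have hc2 : ((Finset.Icc (1:ℤ) (2*N+1)) \ {a, b}).card + 2 = 2*N + 1 := by
    have hss : ({a, b} : Finset ℤ) ⊆ Finset.Icc (1:ℤ) (2*N+1) := by
      intro x hx
      simp only [Finset.mem_insert, Finset.mem_singleton] at hx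
      rcases hx with rfl | rfl <;> simp [Finset.mem_Icc] <;> omega
    have hcab : ({a, b} : Finset ℤ).card = 2 := Finset.card_pair hab
    have := Finset.card_sdiff_of_subset hss
    rw [this, hcab]
    have hicc : (Finset.Icc (1:ℤ) (2*N+1)).card = 2*N+1 := by
      rw [Int.card_Icc]
      norm_num
      omega
    omega
  have := Finset.card_le_card hsub
  omega

lemma chain (s : PegSolution N L) (t : ℕ) (ht1 : t < L) (ht2 : t + 1 < L) :
    s.pos (t+2) (mv s (t+1) ht2) = s.pos t (mv s t ht1) := by
  apply free_unique s (t+1) (by omega)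
  · exact (s.mem_range (t+2) (by omega) _).1
  · exact (s.mem_range (t+2) (by omega) _).2
  · exact (s.mem_range t (by omega) _).1
  · exact (s.mem_range t (by omega) _).2
  · intro p hp
    by_cases hpm : p = mv s (t+1) ht2
    · subst hpm; exact mv_ne s (t+1) ht2 hp.symm
    · have h1 : s.pos (t+2) p = s.pos (t+1) p := mv_fix s (t+1) ht2 p hpm
      exact hpm (s.inj (t+2) (by omega) p _ (h1.trans hp))
  · intro p hp
    by_cases hpm : p = mv s t ht1
    · subst hpm; exact mv_ne s t ht1 hp
    · have h1 : s.pos (t+1) p = s.pos t p := mv_fix s t ht1 p hpm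
      exact hpm (s.inj t (by omega) p _ (h1.symm.trans hp))

lemma no_event_step (s : PegSolution N L) (P : Peg N) (t : ℕ) (ht : t < L)
    (hnl : ¬ LeftEvent s P t) (hnr : ¬ RightEvent s P t) :
    s.pos (t+1) P = s.pos t P ∧
    (s.pos t P < s.pos (t+1) (mv s t ht) → s.pos t P < s.pos t (mv s t ht)) ∧
    (s.pos (t+1) (mv s t ht) < s.pos t P → s.pos t (mv s t ht) < s.pos t P) := by
  have hPm : P ≠ mv s t ht := by
    intro hP
    rcases mv_d s t ht with (hd | hd) | ⟨hd | hd, -⟩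
    · exact hnr (Or.inl (by rw [hP]; omega))
    · exact hnl (Or.inl (by rw [hP]; omega))
    · exact hnr (Or.inl (by rw [hP]; omega))
    · exact hnl (Or.inl (by rw [hP]; omega))
  have hfix : s.pos (t+1) P = s.pos t P := mv_fix s t ht P hPm
  have hsrc : s.pos t (mv s t ht) ≠ s.pos t P := by
    intro h; exact hPm (s.inj t (le_of_lt ht) _ P h).symm
  refine ⟨hfix, ?_, ?_⟩
  · intro hlt
    by_contra hge
    push_neg at hge
    have hlt' : s.pos t (mv s t ht) < s.pos t P := lt_of_le_of_ne hge hsrc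
    rcases mv_d s t ht with (hd | hd) | ⟨hd | hd, mid, hmidm, hmid⟩
    · omega
    · omega
    · have hmP : mid = P := by
        apply s.inj t (le_of_lt ht)
        omega
      subst hmP
      exact hnr (Or.inr ⟨mv s t ht, Ne.symm hPm, hd, hmid⟩)
    · omega
  · intro hlt
    by_contra hge
    push_neg at hge
    have hlt' : s.pos t P < s.pos t (mv s t ht) := lt_of_le_of_ne hge (Ne.symm hsrc)
    rcases mv_d s t ht with (hd | hd) | ⟨hd | hd, mid, hmidm, hmid⟩
    · omega
    · omega
    · omega
    · have hmP : mid = P := by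
        apply s.inj t (le_of_lt ht)
        omega
      subst hmP
      exact hnl (Or.inr ⟨mv s t ht, Ne.symm hPm, hd, hmid⟩)

lemma left_src (s : PegSolution N L) (P : Peg N) (t : ℕ) (ht : t < L)
    (h : LeftEvent s P t) : s.pos (t+1) P < s.pos t (mv s t ht) := by
  rcases h with h | ⟨q, hqP, hd, hmid⟩
  · have hPm : P = mv s t ht := by
      by_contra hne
      rw [mv_fix s t ht P hne] at h; omega
    rw [← hPm]; exact h
  · have hqm : q = mv s t ht := by
      by_contra hne
      rw [mv_fix s t ht q hne] at hd; omega
    have hPm : P ≠ mv s t ht := fun h' => hqP (hqm.trans h'.symm)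
    have hfix : s.pos (t+1) P = s.pos t P := mv_fix s t ht P hPm
    rw [← hqm]
    omega

lemma left_dst (s : PegSolution N L) (P : Peg N) (t : ℕ) (ht : t < L)
    (h : LeftEvent s P t) : s.pos (t+1) (mv s t ht) < s.pos t P := by
  rcases h with h | ⟨q, hqP, hd, hmid⟩
  · have hPm : P = mv s t ht := by
      by_contra hne
      rw [mv_fix s t ht P hne] at h; omega
    rw [← hPm]; exact h
  · have hqm : q = mv s t ht := by
      by_contra hne
      rw [mv_fix s t ht q hne] at hd; omega
    rw [← hqm]
    omega

lemma right_src (s : PegSolution N L) (P : Peg N) (t : ℕ) (ht : t < L)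
    (h : RightEvent s P t) : s.pos t (mv s t ht) < s.pos (t+1) P := by
  rcases h with h | ⟨q, hqP, hd, hmid⟩
  · have hPm : P = mv s t ht := by
      by_contra hne
      rw [mv_fix s t ht P hne] at h; omega
    rw [← hPm]; exact h
  · have hqm : q = mv s t ht := by
      by_contra hne
      rw [mv_fix s t ht q hne] at hd; omega
    have hPm : P ≠ mv s t ht := fun h' => hqP (hqm.trans h'.symm)
    have hfix : s.pos (t+1) P = s.pos t P := mv_fix s t ht P hPm
    rw [← hqm]
    omega

lemma right_dst (s : PegSolution N L) (P : Peg N) (t : ℕ) (ht : t < L)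
    (h : RightEvent s P t) : s.pos t P < s.pos (t+1) (mv s t ht) := by
  rcases h with h | ⟨q, hqP, hd, hmid⟩
  · have hPm : P = mv s t ht := by
      by_contra hne
      rw [mv_fix s t ht P hne] at h; omega
    rw [← hPm]; exact h
  · have hqm : q = mv s t ht := by
      by_contra hne
      rw [mv_fix s t ht q hne] at hd; omega
    rw [← hqm]
    omega

end PegAlt

/-- From the point of view of a fixed peg `P`, leftward events (type A or B)
strictly alternate with rightward events (type C or D): if `P` notices events
on moves `t₁ < t₂` and notices nothing strictly in between, then the events
at `t₁` and `t₂` are of opposite kinds. -/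
theorem events_alternate (N L : ℕ) (s : PegSolution N L) (P : Peg N)
    (t₁ t₂ : ℕ) (h12 : t₁ < t₂) (h2L : t₂ < L)
    (h1 : LeftEvent s P t₁ ∨ RightEvent s P t₁)
    (h2 : LeftEvent s P t₂ ∨ RightEvent s P t₂)
    (hbetween : ∀ u, t₁ < u → u < t₂ →
      ¬ (LeftEvent s P u ∨ RightEvent s P u)) :
    (LeftEvent s P t₁ → RightEvent s P t₂) ∧
    (RightEvent s P t₁ → LeftEvent s P t₂) := by
  constructor
  · intro hL1
    have key : ∀ u, t₁ + 1 ≤ u → ∀ hu : u ≤ t₂,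
        s.pos u P < s.pos (u+1) (PegAlt.mv s u (lt_of_le_of_lt hu h2L)) := by
      intro u hu1
      induction u, hu1 using Nat.le_induction with
      | base =>
        intro hu
        have hc := PegAlt.chain s t₁ (by omega) (by omega)
        have hs := PegAlt.left_src s P t₁ (by omega) hL1
        exact lt_of_lt_of_le hs (le_of_eq hc.symm)
      | succ u hu ih =>
        intro huu
        have hne := hbetween u (by omega) (by omega)
        push_neg at hne
        have hstep := PegAlt.no_event_step s P u (by omega) hne.1 hne.2
        have hc := PegAlt.chain s u (by omega) (by omega)
        have h2' := hstep.2.1 (ih (by omega))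
        exact lt_of_le_of_lt (le_of_eq hstep.1) (lt_of_lt_of_le h2' (le_of_eq hc.symm))
    have hkey := key t₂ (by omega) (le_refl t₂)
    have hnl2 : ¬ LeftEvent s P t₂ := by
      intro hle
      have := PegAlt.left_dst s P t₂ h2L hle
      exact absurd (lt_trans hkey this) (lt_irrefl _)
    rcases h2 with h | h
    · exact absurd h hnl2
    · exact h
  · intro hR1
    have key : ∀ u, t₁ + 1 ≤ u → ∀ hu : u ≤ t₂,
        s.pos (u+1) (PegAlt.mv s u (lt_of_le_of_lt hu h2L)) < s.pos u P := by
      intro u hu1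
      induction u, hu1 using Nat.le_induction with
      | base =>
        intro hu
        have hc := PegAlt.chain s t₁ (by omega) (by omega)
        have hs := PegAlt.right_src s P t₁ (by omega) hR1
        exact lt_of_le_of_lt (le_of_eq hc) hs
      | succ u hu ih =>
        intro huu
        have hne := hbetween u (by omega) (by omega)
        push_neg at hne
        have hstep := PegAlt.no_event_step s P u (by omega) hne.1 hne.2
        have hc := PegAlt.chain s u (by omega) (by omega)
        have h2' := hstep.2.2 (ih (by omega))
        exact lt_of_le_of_lt (le_of_eq hc) (lt_of_lt_of_le h2' (le_of_eq hstep.1.symm))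
    have hkey := key t₂ (by omega) (le_refl t₂)
    have hnr2 : ¬ RightEvent s P t₂ := by
      intro hre
      have := PegAlt.right_dst s P t₂ h2L hre
      exact absurd (lt_trans hkey this) (lt_irrefl _)
    rcases h2 with h | h
    · exact h
    · exact absurd h hnr2
end

section
/- From any configuration of the peg puzzle, no more than N consecutive weight-increasing jumps are possible. -/
open Cell

/-- A weight-increasing jump: a blue peg jumps to the right, or a red peg
jumps to the left, over a single adjacent peg into the empty hole. -/
def WeightIncreasingJump (c d : List Cell) : Prop :=
  (∃ x y p, p ≠ O ∧ c = x ++ B :: p :: O :: y ∧ d = x ++ O :: p :: B :: y) ∨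
  (∃ x y p, p ≠ O ∧ c = x ++ O :: p :: R :: y ∧ d = x ++ R :: p :: O :: y)

/-!
A weight-increasing jump preserves the multiset of cells, so the hole stays unique. A blue jump
leaves a blue peg two cells to the right of the hole, so the next weight-increasing jump cannot be
red and is again blue; hence a run of such jumps consists of jumps of a single colour, each moving
the hole two cells in the same direction. In a row of `2N + 1` holes this happens at most `N`
times. A run of red jumps is the mirror image (reverse the row, swap the colours) of a run of blue
jumps.
-/

theorem List.count_B_add_count_R_add_count_O (l : List Cell) :
    l.count B + l.count R + l.count O = l.length := by
  induction l with
  | nil => rfl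
  | cons a l ih => cases a <;> simp <;> omega

theorem append_hole_inj {x y x' y' : List Cell} (hc : (x ++ O :: y).count O = 1)
    (h : x ++ O :: y = x' ++ O :: y') : x = x' ∧ y = y' := by
  have hx : O ∉ x := List.count_eq_zero.1 (by
    rw [List.count_append, List.count_cons_self] at hc; omega)
  have hx' : O ∉ x' := List.count_eq_zero.1 (by
    rw [h, List.count_append, List.count_cons_self] at hc; omega)
  have hlen : x.length = x'.length := by
    simpa [List.idxOf_append_of_notMem, hx, hx'] using congrArg (List.idxOf O) h
  obtain ⟨rfl, hy⟩ := List.append_inj h hlen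
  exact ⟨rfl, List.cons_injective hy⟩

theorem WeightIncreasingJump.perm {c d : List Cell} (h : WeightIncreasingJump c d) :
    c.Perm d := by
  rcases h with ⟨x, y, p, -, rfl, rfl⟩ | ⟨x, y, p, -, rfl, rfl⟩
  · exact List.Perm.append_left x (by grind)
  · exact List.Perm.append_left x (by grind)

def Cell.swap : Cell → Cell
  | B => R
  | R => B
  | O => O

theorem Cell.swap_ne_O {p : Cell} (hp : p ≠ O) : p.swap ≠ O := by
  cases p <;> simp_all [Cell.swap]

def mirrorCfg (c : List Cell) : List Cell := (c.map Cell.swap).reverse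

theorem count_O_mirrorCfg (c : List Cell) : (mirrorCfg c).count O = c.count O := by
  induction c with
  | nil => rfl
  | cons a c ih => cases a <;> simp_all [mirrorCfg, Cell.swap]

theorem WeightIncreasingJump.mirror {c d : List Cell} (h : WeightIncreasingJump c d) :
    WeightIncreasingJump (mirrorCfg c) (mirrorCfg d) := by
  rcases h with ⟨x, y, p, hp, rfl, rfl⟩ | ⟨x, y, p, hp, rfl, rfl⟩
  · exact Or.inr ⟨mirrorCfg y, mirrorCfg x, p.swap, Cell.swap_ne_O hp,
      by simp [mirrorCfg, Cell.swap], by simp [mirrorCfg, Cell.swap]⟩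
  · exact Or.inl ⟨mirrorCfg y, mirrorCfg x, p.swap, Cell.swap_ne_O hp,
      by simp [mirrorCfg, Cell.swap], by simp [mirrorCfg, Cell.swap]⟩

def IsWeightIncreasingRun (m : ℕ) (f : ℕ → List Cell) : Prop :=
  ∀ t < m, WeightIncreasingJump (f t) (f (t + 1))

namespace IsWeightIncreasingRun

variable {m : ℕ} {f : ℕ → List Cell}

theorem tail (hf : IsWeightIncreasingRun (m + 1) f) : IsWeightIncreasingRun m (f ∘ (· + 1)) :=
  fun t ht => hf (t + 1) (by omega)

theorem mirror (hf : IsWeightIncreasingRun m f) : IsWeightIncreasingRun m (mirrorCfg ∘ f) :=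
  fun t ht => (hf t ht).mirror

theorem count_O_one (hf : IsWeightIncreasingRun (m + 1) f) (hc : (f 0).count O = 1) :
    (f 1).count O = 1 :=
  (hf 0 m.succ_pos).perm.count_eq O ▸ hc

theorem two_mul_le_of_blue_two_right_of_hole (hf : IsWeightIncreasingRun m f)
    (hc : (f 0).count O = 1) {x y : List Cell} {p : Cell} (h0 : f 0 = x ++ O :: p :: B :: y) :
    2 * m ≤ x.length := by
  induction m generalizing f x y p with
  | zero => omega
  | succ m ih =>
    rcases hf 0 m.succ_pos with ⟨x', y', q, -, h0', h1⟩ | ⟨x', y', q, -, h0', h1⟩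
    · obtain ⟨rfl, -⟩ := append_hole_inj (h0 ▸ hc)
        (by simpa [h0] using h0' : x ++ O :: p :: B :: y = (x' ++ [B, q]) ++ O :: y')
      have := ih hf.tail (hf.count_O_one hc) h1
      simp only [List.length_append, List.length_cons, List.length_nil]
      omega
    · obtain ⟨-, h⟩ := append_hole_inj (h0 ▸ hc) (h0 ▸ h0')
      simp at h

theorem two_mul_add_one_le_length (hf : IsWeightIncreasingRun m f) (hc : (f 0).count O = 1) :
    2 * m + 1 ≤ (f 0).length := by
  cases m with
  | zero => exact List.length_pos_of_mem (List.count_pos_iff.1 (hc ▸ one_pos))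
  | succ m =>
    rcases hf 0 m.succ_pos with ⟨x, y, p, -, h0, h1⟩ | ⟨x, y, p, -, h0, h1⟩
    · have := hf.tail.two_mul_le_of_blue_two_right_of_hole (hf.count_O_one hc) h1
      rw [h0, List.length_append, List.length_cons, List.length_cons, List.length_cons]
      omega
    · have h1' :
          (mirrorCfg ∘ f ∘ (· + 1)) 0 = mirrorCfg y ++ O :: p.swap :: B :: mirrorCfg x := by
        simp [h1, mirrorCfg, Cell.swap]
      have := hf.tail.mirror.two_mul_le_of_blue_two_right_of_hole
        ((count_O_mirrorCfg _).trans (hf.count_O_one hc)) h1'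
      rw [mirrorCfg, List.length_reverse, List.length_map] at this
      rw [h0, List.length_append, List.length_cons, List.length_cons, List.length_cons]
      omega

end IsWeightIncreasingRun

/-- From any configuration of the `N`-peg puzzle (a row of `2N + 1` holes
containing `N` blue pegs, `N` red pegs and one empty hole), no more than `N`
consecutive weight-increasing jumps are possible. -/
theorem consecutive_jumps_le (N L : ℕ) (f : ℕ → List Cell)
    (hlen : (f 0).length = 2 * N + 1)
    (hB : (f 0).count B = N) (hR : (f 0).count R = N)
    (hmoves : ∀ t < L, WeightIncreasingJump (f t) (f (t + 1))) :
    L ≤ N := by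
  have hc : (f 0).count O = 1 := by
    have := (f 0).count_B_add_count_R_add_count_O
    omega
  have := IsWeightIncreasingRun.two_mul_add_one_le_length hmoves hc
  omega
end
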